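/- Let D be a compact metric space, μ a finite Radon measure, and suppose each A_y (y ∈ D) is a zonoid in ℝ^n, with y ↦ A_y continuous in the Hausdorff metric. Then the Minkowski integral ∫_D A_y dμ(y) is a zonoid. -/

import Mathlib

open MeasureTheory Metric Set Filter
open scoped RealInnerProductSpace NNReal ENNReal Pointwise Topology

/-- The support function of a set `A ⊆ ℝⁿ`: `h_A(ξ) = sup_{ζ ∈ A} ⟨ζ, ξ⟩`. -/
noncomputable def suppFn {n : ℕ} (A : Set (EuclideanSpace ℝ (Fin n)))
    (ξ : EuclideanSpace ℝ (Fin n)) : ℝ :=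
  sSup ((fun ζ => ⟪ζ, ξ⟫) '' A)

/-- A zonotope: a translate of a finite Minkowski sum of segments `[0, vᵢ]`. -/
def IsZonotope {n : ℕ} (K : ConvexBody (EuclideanSpace ℝ (Fin n))) : Prop :=
  ∃ (N : ℕ) (v : Fin N → EuclideanSpace ℝ (Fin n)) (d : EuclideanSpace ℝ (Fin n)),
    (K : Set (EuclideanSpace ℝ (Fin n)))
      = {d} + ∑ i, segment ℝ (0 : EuclideanSpace ℝ (Fin n)) (v i)

/-- A zonoid: a Hausdorff limit of zonotopes. -/
def IsZonoid {n : ℕ} (K : ConvexBody (EuclideanSpace ℝ (Fin n))) : Prop :=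
  ∃ Z : ℕ → ConvexBody (EuclideanSpace ℝ (Fin n)),
    (∀ k, IsZonotope (Z k)) ∧ Tendsto Z atTop (𝓝 K)

/-! Support functions turn the Minkowski operations into addition and nonnegative scaling, and
control the Hausdorff distance: `|h_K ξ - h_L ξ| ≤ d(K, L) ‖ξ‖`, and conversely, by separation,
`h_K ≤ h_L + ε ‖·‖` forces `K ⊆ L + ε B`. Hence Minkowski sums and nonnegative dilations are
continuous, and the zonoids, being the closure of the zonotopes, are stable under both.

Cut `D` into finitely many measurable pieces `Tᵢ ⊆ ball yᵢ δ`, with `δ` so small that `A` moves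
by at most `ε` on each (uniform continuity). The zonoid `∑ μ(Tᵢ) • A yᵢ` is a Riemann sum for the Minkowski
integral: its support function is within `μ(D) ε ‖ξ‖` of `∫ h_{A y}(ξ) dμ = h_K(ξ)`, so it lies
within `μ(D) ε` of `K`. Letting `ε → 0`, `K` is a limit of zonoids, hence a zonoid. -/

open Function

theorem exists_measurable_partition_subset_ball {D : Type*} [PseudoMetricSpace D] [CompactSpace D]
    [MeasurableSpace D] [OpensMeasurableSpace D] {δ : ℝ} (hδ : 0 < δ) :
    ∃ (m : ℕ) (T : Fin m → Set D) (y : Fin m → D), (∀ i, MeasurableSet (T i)) ∧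
      Pairwise (Disjoint on T) ∧ ⋃ i, T i = univ ∧ ∀ i, T i ⊆ ball (y i) δ := by
  obtain ⟨t, -, ht, hcover⟩ :=
    finite_cover_balls_of_compact (isCompact_univ : IsCompact (univ : Set D)) hδ
  obtain ⟨m, y, -, rfl⟩ := ht.fin_param
  refine ⟨m, disjointed fun i => ball (y i) δ, y, fun i => ?_, disjoint_disjointed _,
    ?_, disjointed_subset _⟩
  · rw [disjointed_eq_inter_compl]
    exact measurableSet_ball.inter (.iInter fun _ => .iInter fun _ => measurableSet_ball.compl)
  · rw [iUnion_disjointed]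
    simpa [eq_univ_iff_forall, subset_def] using hcover

theorem abs_sum_measureReal_mul_sub_integral_le {α ι : Type*} [MeasurableSpace α]
    {μ : Measure α} [IsFiniteMeasure μ] [Fintype ι] {T : ι → Set α}
    (hT : ∀ i, MeasurableSet (T i)) (hdisj : Pairwise (Disjoint on T))
    (hcover : ⋃ i, T i = univ)
    {f : α → ℝ} (hf : Integrable f μ) {c : ι → ℝ} {η : ℝ}
    (hc : ∀ i, ∀ y ∈ T i, |f y - c i| ≤ η) :
    |∑ i, μ.real (T i) * c i - ∫ y, f y ∂μ| ≤ μ.real univ * η := by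
  have hpiece (i : ι) : |μ.real (T i) * c i - ∫ y in T i, f y ∂μ| ≤ μ.real (T i) * η := by
    rw [← abs_neg, neg_sub, ← smul_eq_mul, ← setIntegral_const,
      ← integral_sub hf.integrableOn (integrableOn_const (measure_ne_top μ _)), mul_comm,
      ← Real.norm_eq_abs]
    exact norm_setIntegral_le_of_norm_le_const (measure_lt_top μ _) (hc i)
  calc |∑ i, μ.real (T i) * c i - ∫ y, f y ∂μ|
      = |∑ i, (μ.real (T i) * c i - ∫ y in T i, f y ∂μ)| := by
        rw [← setIntegral_univ, ← hcover,
          integral_iUnion_fintype hT hdisj fun i => hf.integrableOn, Finset.sum_sub_distrib]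
    _ ≤ ∑ i, μ.real (T i) * η :=
      (Finset.abs_sum_le_sum_abs _ _).trans (Finset.sum_le_sum fun i _ => hpiece i)
    _ = μ.real univ * η := by
      rw [← Finset.sum_mul, ← measureReal_iUnion_fintype hdisj hT, hcover]

section

variable {n : ℕ}
local notation "E" => EuclideanSpace ℝ (Fin n)

theorem suppFn_eq_sSup_image_innerSL (s : Set E) (ξ : E) :
    suppFn s ξ = sSup (innerSL ℝ ξ '' s) := by
  rw [suppFn]
  congr! 2 with ζ
  rw [innerSL_apply_apply, real_inner_comm]

theorem ConvexBody.bddAbove_image_innerSL (K : ConvexBody E) (ξ : E) :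
    BddAbove (innerSL ℝ ξ '' K) :=
  (K.isCompact.image (innerSL ℝ ξ).continuous).bddAbove

theorem inner_le_suppFn {K : ConvexBody E} {ζ : E} (hζ : ζ ∈ K) (ξ : E) :
    ⟪ζ, ξ⟫ ≤ suppFn (K : Set E) ξ := by
  rw [suppFn_eq_sSup_image_innerSL, real_inner_comm, ← innerSL_apply_apply]
  exact le_csSup (K.bddAbove_image_innerSL ξ) (mem_image_of_mem _ hζ)

theorem suppFn_le {K : ConvexBody E} {ξ : E} {c : ℝ} (h : ∀ ζ ∈ K, ⟪ζ, ξ⟫ ≤ c) :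
    suppFn (K : Set E) ξ ≤ c :=
  csSup_le (K.nonempty.image _) (forall_mem_image.2 h)

theorem suppFn_add (K L : ConvexBody E) (ξ : E) :
    suppFn ((K + L : ConvexBody E) : Set E) ξ = suppFn (K : Set E) ξ + suppFn (L : Set E) ξ := by
  simp only [suppFn_eq_sSup_image_innerSL, ConvexBody.coe_add, image_add]
  exact csSup_add (K.nonempty.image _) (K.bddAbove_image_innerSL ξ) (L.nonempty.image _)
    (L.bddAbove_image_innerSL ξ)

theorem suppFn_smul {c : ℝ} (hc : 0 ≤ c) (K : ConvexBody E) (ξ : E) :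
    suppFn ((c • K : ConvexBody E) : Set E) ξ = c * suppFn (K : Set E) ξ := by
  simp only [suppFn_eq_sSup_image_innerSL, ConvexBody.coe_smul, image_smul_set,
    Real.sSup_smul_of_nonneg hc, smul_eq_mul]

theorem suppFn_sum {ι : Type*} (s : Finset ι) (K : ι → ConvexBody E) (ξ : E) :
    suppFn ((∑ i ∈ s, K i : ConvexBody E) : Set E) ξ = ∑ i ∈ s, suppFn (K i : Set E) ξ :=
  map_sum (AddMonoidHom.mk' (fun L : ConvexBody E => suppFn (L : Set E) ξ) (suppFn_add · · ξ))
    K s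

noncomputable def closedBallBody (r : ℝ) (hr : 0 ≤ r) : ConvexBody E :=
  ⟨closedBall 0 r, convex_closedBall 0 r, isCompact_closedBall 0 r, nonempty_closedBall.2 hr⟩

@[simp]
theorem mem_closedBallBody {r : ℝ} {hr : 0 ≤ r} {x : E} :
    x ∈ closedBallBody r hr ↔ ‖x‖ ≤ r :=
  mem_closedBall_zero_iff

theorem suppFn_closedBallBody {r : ℝ} (hr : 0 ≤ r) (ξ : E) :
    suppFn ((closedBallBody r hr : ConvexBody E) : Set E) ξ = r * ‖ξ‖ := by
  refine le_antisymm (suppFn_le fun ζ hζ => ?_) ?_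
  · calc ⟪ζ, ξ⟫ ≤ ‖ζ‖ * ‖ξ‖ := real_inner_le_norm ζ ξ
      _ ≤ r * ‖ξ‖ := by gcongr; simpa using hζ
  rcases eq_or_ne ξ 0 with rfl | hξ
  · simpa using inner_le_suppFn (K := closedBallBody r hr) (mem_closedBall_self hr) 0
  · have hmem : (r / ‖ξ‖) • ξ ∈ closedBallBody r hr := by
      rw [mem_closedBallBody, norm_smul, Real.norm_of_nonneg (by positivity),
        div_mul_cancel₀ _ (norm_ne_zero_iff.2 hξ)]
    calc r * ‖ξ‖ = ⟪(r / ‖ξ‖) • ξ, ξ⟫ := by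
          rw [real_inner_smul_left, real_inner_self_eq_norm_sq]
          field_simp
      _ ≤ _ := inner_le_suppFn hmem ξ

theorem suppFn_le_suppFn_add_dist_mul (K L : ConvexBody E) (ξ : E) :
    suppFn (K : Set E) ξ ≤ suppFn (L : Set E) ξ + dist K L * ‖ξ‖ := by
  refine suppFn_le fun x hx => ?_
  obtain ⟨y, hy, hxy⟩ := L.isCompact.exists_infDist_eq_dist L.nonempty x
  have hdist : dist x y ≤ dist K L := by
    rw [← hxy, ← ConvexBody.hausdorffDist_coe]
    exact infDist_le_hausdorffDist_of_mem hx ConvexBody.hausdorffEDist_ne_top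
  calc ⟪x, ξ⟫ = ⟪y, ξ⟫ + ⟪x - y, ξ⟫ := by rw [← inner_add_left, add_sub_cancel]
    _ ≤ suppFn (L : Set E) ξ + ‖x - y‖ * ‖ξ‖ :=
      add_le_add (inner_le_suppFn hy ξ) (real_inner_le_norm _ _)
    _ ≤ suppFn (L : Set E) ξ + dist K L * ‖ξ‖ := by rw [← dist_eq_norm]; gcongr

theorem abs_suppFn_sub_suppFn_le (K L : ConvexBody E) (ξ : E) :
    |suppFn (K : Set E) ξ - suppFn (L : Set E) ξ| ≤ dist K L * ‖ξ‖ :=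
  abs_sub_le_iff.2 ⟨by linarith [suppFn_le_suppFn_add_dist_mul K L ξ],
    by linarith [dist_comm K L ▸ suppFn_le_suppFn_add_dist_mul L K ξ]⟩

theorem lipschitzWith_suppFn (ξ : E) :
    LipschitzWith ‖ξ‖₊ fun K : ConvexBody E => suppFn (K : Set E) ξ :=
  LipschitzWith.of_dist_le_mul fun K L => by
    simpa only [Real.dist_eq, coe_nnnorm, mul_comm] using abs_suppFn_sub_suppFn_le K L ξ

namespace ConvexBody

theorem subset_of_suppFn_le {K L : ConvexBody E}
    (h : ∀ ξ, suppFn (K : Set E) ξ ≤ suppFn (L : Set E) ξ) :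
    (K : Set E) ⊆ L := by
  intro x hx
  by_contra hxL
  obtain ⟨f, u, hfL, hfx⟩ := geometric_hahn_banach_closed_point L.convex L.isClosed hxL
  obtain ⟨ξ, rfl⟩ := (InnerProductSpace.toDual ℝ E).surjective f
  simp only [InnerProductSpace.toDual_apply_apply] at hfL hfx
  have hL : suppFn (L : Set E) ξ ≤ u :=
    suppFn_le fun ζ hζ => real_inner_comm ζ ξ ▸ (hfL ζ hζ).le
  linarith [h ξ, inner_le_suppFn hx ξ, real_inner_comm x ξ]

theorem exists_dist_le_of_suppFn_le {K L : ConvexBody E} {ε : ℝ} (hε : 0 ≤ ε)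
    (h : ∀ ξ, suppFn (K : Set E) ξ ≤ suppFn (L : Set E) ξ + ε * ‖ξ‖) :
    ∀ x ∈ (K : Set E), ∃ y ∈ (L : Set E), dist x y ≤ ε := by
  have hsub : (K : Set E) ⊆ (L + closedBallBody ε hε : ConvexBody E) :=
    subset_of_suppFn_le fun ξ => by simpa only [suppFn_add, suppFn_closedBallBody] using h ξ
  intro x hx
  obtain ⟨y, hy, z, hz, rfl⟩ := hsub hx
  exact ⟨y, hy, by simpa [dist_eq_norm] using hz⟩

theorem dist_le_of_abs_suppFn_sub_le {K L : ConvexBody E} {ε : ℝ} (hε : 0 ≤ ε)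
    (h : ∀ ξ, |suppFn (K : Set E) ξ - suppFn (L : Set E) ξ| ≤ ε * ‖ξ‖) : dist K L ≤ ε := by
  rw [← hausdorffDist_coe]
  exact hausdorffDist_le_of_mem_dist hε
    (exists_dist_le_of_suppFn_le hε fun ξ => by linarith [(abs_sub_le_iff.1 (h ξ)).1])
    (exists_dist_le_of_suppFn_le hε fun ξ => by linarith [(abs_sub_le_iff.1 (h ξ)).2])

theorem dist_add_add_right_le (K K' L : ConvexBody E) : dist (K + L) (K' + L) ≤ dist K K' :=
  dist_le_of_abs_suppFn_sub_le dist_nonneg fun ξ => by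
    simpa only [suppFn_add, add_sub_add_right_eq_sub] using abs_suppFn_sub_suppFn_le K K' ξ

theorem dist_smul_smul_le {c : ℝ} (hc : 0 ≤ c) (K L : ConvexBody E) :
    dist (c • K) (c • L) ≤ c * dist K L :=
  dist_le_of_abs_suppFn_sub_le (by positivity) fun ξ => by
    rw [suppFn_smul hc, suppFn_smul hc, ← mul_sub, abs_mul, abs_of_nonneg hc, mul_assoc]
    exact mul_le_mul_of_nonneg_left (abs_suppFn_sub_suppFn_le K L ξ) hc

theorem continuous_add_right (L : ConvexBody E) : Continuous fun K : ConvexBody E => K + L :=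
  (LipschitzWith.of_dist_le' (K := 1) fun K K' => by
    simpa using dist_add_add_right_le K K' L).continuous

theorem continuous_const_smul {c : ℝ} (hc : 0 ≤ c) : Continuous fun K : ConvexBody E => c • K :=
  (LipschitzWith.of_dist_le' (dist_smul_smul_le hc)).continuous

end ConvexBody

theorem smul_segment_zero {V : Type*} [AddCommGroup V] [Module ℝ V] (c : ℝ) (v : V) :
    c • segment ℝ (0 : V) v = segment ℝ 0 (c • v) := by
  convert image_segment ℝ (LinearMap.lsmul ℝ V c).toAffineMap 0 v using 1
  · exact image_smul.symm
  · simp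

theorem IsZonotope.zero : IsZonotope (0 : ConvexBody E) :=
  ⟨0, ![], 0, by simp [ConvexBody.coe_zero]; rfl⟩

theorem IsZonotope.add {K L : ConvexBody E} (hK : IsZonotope K) (hL : IsZonotope L) :
    IsZonotope (K + L) := by
  obtain ⟨N, v, d, hv⟩ := hK
  obtain ⟨M, w, e, hw⟩ := hL
  refine ⟨N + M, Fin.append v w, d + e, ?_⟩
  rw [ConvexBody.coe_add, hv, hw, Fin.sum_univ_add]
  simp only [Fin.append_left, Fin.append_right]
  rw [← singleton_add_singleton, add_add_add_comm]

theorem IsZonotope.smul (c : ℝ) {K : ConvexBody E} (hK : IsZonotope K) :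
    IsZonotope (c • K) := by
  obtain ⟨N, v, d, hv⟩ := hK
  refine ⟨N, fun i => c • v i, c • d, ?_⟩
  rw [ConvexBody.coe_smul, hv, smul_add, smul_set_singleton, Finset.smul_sum]
  simp only [smul_segment_zero]

theorem isZonoid_iff_mem_closure {K : ConvexBody E} :
    IsZonoid K ↔ K ∈ closure {Z | IsZonotope Z} := by
  simp only [IsZonoid, mem_closure_iff_seq_limit, mem_ofPred_eq]

theorem IsZonoid.zero : IsZonoid (0 : ConvexBody E) :=
  isZonoid_iff_mem_closure.2 (subset_closure IsZonotope.zero)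

theorem IsZonoid.add {K L : ConvexBody E} (hK : IsZonoid K) (hL : IsZonoid L) :
    IsZonoid (K + L) := by
  rw [isZonoid_iff_mem_closure] at *
  refine map_mem_closure₂' (fun K => ?_) ConvexBody.continuous_add_right hK hL
    fun _ hZ _ hW => hZ.add hW
  simpa only [add_comm] using ConvexBody.continuous_add_right K

theorem IsZonoid.smul {c : ℝ} (hc : 0 ≤ c) {K : ConvexBody E} (hK : IsZonoid K) :
    IsZonoid (c • K) := by
  rw [isZonoid_iff_mem_closure] at *
  exact map_mem_closure (ConvexBody.continuous_const_smul hc) hK fun _ hZ => hZ.smul c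

theorem isClosed_setOf_isZonoid : IsClosed {K : ConvexBody E | IsZonoid K} := by
  convert isClosed_closure (s := {Z : ConvexBody E | IsZonotope Z})
  exact Set.ext fun _ => isZonoid_iff_mem_closure

theorem exists_isZonoid_dist_le {D : Type*} [PseudoMetricSpace D] [CompactSpace D]
    [MeasurableSpace D] [OpensMeasurableSpace D] (μ : Measure D) [IsFiniteMeasure μ]
    {A : D → ConvexBody E} (hA : Continuous A) (hzon : ∀ y, IsZonoid (A y)) {K : ConvexBody E}
    (hK : ∀ ξ, suppFn (K : Set E) ξ = ∫ y, suppFn (A y : Set E) ξ ∂μ)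
    {ε : ℝ} (hε : 0 < ε) :
    ∃ Z, IsZonoid Z ∧ dist Z K ≤ μ.real univ * ε := by
  obtain ⟨δ, hδ, hAδ⟩ :=
    Metric.uniformContinuous_iff.1 (CompactSpace.uniformContinuous_of_continuous hA) ε hε
  obtain ⟨m, T, y, hT, hdisj, hcover, hTy⟩ :=
    exists_measurable_partition_subset_ball (D := D) hδ
  have hZ : IsZonoid (∑ i, μ.real (T i) • A (y i)) :=
    Finset.sum_induction _ IsZonoid (fun _ _ => IsZonoid.add) IsZonoid.zero
      fun i _ => (hzon (y i)).smul measureReal_nonneg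
  refine ⟨_, hZ, ConvexBody.dist_le_of_abs_suppFn_sub_le (by positivity) fun ξ => ?_⟩
  have hcont : Continuous fun z => suppFn (A z : Set E) ξ :=
    (lipschitzWith_suppFn ξ).continuous.comp hA
  rw [suppFn_sum, hK, mul_assoc]
  simp only [suppFn_smul measureReal_nonneg]
  refine abs_sum_measureReal_mul_sub_integral_le hT hdisj hcover
    (hcont.integrable_of_hasCompactSupport (.of_compactSpace _)) fun i z hz => ?_
  exact (abs_suppFn_sub_suppFn_le _ _ ξ).trans
    (mul_le_mul_of_nonneg_right (hAδ (hTy i hz)).le (norm_nonneg ξ))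

end

/-- The Minkowski integral of a continuous family of zonoids is a zonoid. -/
theorem minkowski_integral_of_zonoids_is_zonoid {n : ℕ} {D : Type*} [MetricSpace D]
    [CompactSpace D] [MeasurableSpace D] [BorelSpace D]
    (μ : Measure D) [IsFiniteMeasure μ]
    (A : D → ConvexBody (EuclideanSpace ℝ (Fin n))) (hA : Continuous A)
    (hzon : ∀ y, IsZonoid (A y))
    (K : ConvexBody (EuclideanSpace ℝ (Fin n)))
    (hK : ∀ ξ, suppFn (K : Set (EuclideanSpace ℝ (Fin n))) ξ
      = ∫ y, suppFn (A y : Set (EuclideanSpace ℝ (Fin n))) ξ ∂μ) :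
    IsZonoid K := by
  choose Z hZ hdist using fun j : ℕ =>
    exists_isZonoid_dist_le μ hA hzon hK (Nat.one_div_pos_of_nat (n := j))
  have hlim : Tendsto Z atTop (𝓝 K) := by
    refine tendsto_iff_dist_tendsto_zero.2 (squeeze_zero (fun _ => dist_nonneg) hdist ?_)
    simpa using tendsto_one_div_add_atTop_nhds_zero_nat.const_mul (μ.real univ)
  exact isClosed_setOf_isZonoid.mem_of_tendsto hlim (.of_forall hZ)
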